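/- arXiv:2506.05541 — 4 statements merged into one kernel-verified Lean document; each statement's English description precedes it below -/
import Mathlib

section
/- Let α ∈ (0, π/3) and define the piecewise linear functions x_k : [0,1] → ℝ by x_k(t) = 2^k f_{k,j}(t − (j−1)/2^k) + f_{k,1} + ⋯ + f_{k,j−1} for t ∈ [(j−1)/2^k, j/2^k], where f_{k,i} = cos(b_{k,i})/(2cos α)^k and the angles b_{k,i} are generated by the paperfolding substitution b_{k+1,2i−1}, b_{k+1,2i} ∈ {b_{k,i}+α, b_{k,i}−α} (alternating order), starting from b_{0,1} = 0. Then for every t ∈ [0,1] and every n ≥ 1, |x_{n+1}(t) − x_n(t)| ≤ 4/(2 cos α)^n. -/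
open Real Filter

/-! Consecutive approximations agree at the dyadic points of level `n`: the two children of a
coefficient sum to it, because `cos (d + α) + cos (d - α) = 2 cos α cos d`. On each dyadic interval
of level `n` the difference is therefore a tent of height `|f_{n+1,2j} - f_{n+1,2j+1}| / 2`, which
is at most `1 / (2 cos α) ^ (n + 1)`; and `2 cos α > 1` since `α < π / 3`. -/

noncomputable def dragonAngle (α : ℝ) : ℕ → ℕ → ℝ
  | 0, _ => 0
  | k+1, i => dragonAngle α k (i / 2) + (if (i / 2) % 2 = i % 2 then α else -α)

noncomputable def fcoef (α : ℝ) (k i : ℕ) : ℝ :=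
  Real.cos (dragonAngle α k i) / (2 * Real.cos α) ^ k

noncomputable def gcoef (α : ℝ) (k i : ℕ) : ℝ :=
  Real.sin (dragonAngle α k i) / (2 * Real.cos α) ^ k

noncomputable def xfun (α : ℝ) (k : ℕ) (t : ℝ) : ℝ :=
  (∑ i ∈ Finset.range (min ⌊t * 2 ^ k⌋₊ (2 ^ k - 1)), fcoef α k i) +
    2 ^ k * fcoef α k (min ⌊t * 2 ^ k⌋₊ (2 ^ k - 1)) *
      (t - (min ⌊t * 2 ^ k⌋₊ (2 ^ k - 1) : ℕ) / 2 ^ k)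

noncomputable def yfun (α : ℝ) (k : ℕ) (t : ℝ) : ℝ :=
  (∑ i ∈ Finset.range (min ⌊t * 2 ^ k⌋₊ (2 ^ k - 1)), gcoef α k i) +
    2 ^ k * gcoef α k (min ⌊t * 2 ^ k⌋₊ (2 ^ k - 1)) *
      (t - (min ⌊t * 2 ^ k⌋₊ (2 ^ k - 1) : ℕ) / 2 ^ k)

-- The clip at `2 ^ k - 1` puts `t = 1` into the last interval.
noncomputable def dyadicIndex (k : ℕ) (t : ℝ) : ℕ := min ⌊t * 2 ^ k⌋₊ (2 ^ k - 1)

lemma dyadicIndex_succ (k : ℕ) (t : ℝ) :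
    dyadicIndex (k + 1) t = 2 * dyadicIndex k t ∨
      dyadicIndex (k + 1) t = 2 * dyadicIndex k t + 1 := by
  have hfloor : ⌊t * 2 ^ (k + 1)⌋₊ / 2 = ⌊t * 2 ^ k⌋₊ := by
    rw [← Nat.floor_div_ofNat, pow_succ, ← mul_assoc, mul_div_cancel_right₀ _ two_ne_zero]
  have hpow : 2 ^ (k + 1) = 2 * 2 ^ k := by ring
  have hpos := Nat.one_le_two_pow (n := k)
  unfold dyadicIndex
  omega

lemma sub_dyadicIndex_mem_Icc {t : ℝ} (ht : t ∈ Set.Icc (0 : ℝ) 1) (k : ℕ) :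
    t * 2 ^ k - dyadicIndex k t ∈ Set.Icc (0 : ℝ) 1 := by
  have hnonneg : 0 ≤ t * 2 ^ k := by have := ht.1; positivity
  have hfloor_le : (⌊t * 2 ^ k⌋₊ : ℝ) ≤ t * 2 ^ k := Nat.floor_le hnonneg
  have hle_floor : (dyadicIndex k t : ℝ) ≤ ⌊t * 2 ^ k⌋₊ := Nat.cast_le.mpr (min_le_left _ _)
  refine ⟨by linarith, ?_⟩
  rcases min_choice ⌊t * 2 ^ k⌋₊ (2 ^ k - 1) with h | h
  · rw [dyadicIndex, h]
    linarith [Nat.lt_floor_add_one (t * 2 ^ k)]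
  · rw [dyadicIndex, h, Nat.cast_sub Nat.one_le_two_pow]
    push_cast
    linarith [mul_le_of_le_one_left (by positivity : (0 : ℝ) ≤ 2 ^ k) ht.2]

lemma xfun_eq (α : ℝ) (k : ℕ) (t : ℝ) :
    xfun α k t = ∑ i ∈ Finset.range (dyadicIndex k t), fcoef α k i +
      fcoef α k (dyadicIndex k t) * (t * 2 ^ k - dyadicIndex k t) := by
  rw [xfun, ← dyadicIndex]
  field_simp

lemma dragonAngle_children (α : ℝ) (k i : ℕ) : ∃ ε, cos ε = cos α ∧
    dragonAngle α (k + 1) (2 * i) = dragonAngle α k i + ε ∧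
    dragonAngle α (k + 1) (2 * i + 1) = dragonAngle α k i - ε := by
  have heven : 2 * i / 2 = i ∧ 2 * i % 2 = 0 := by omega
  have hodd : (2 * i + 1) / 2 = i ∧ (2 * i + 1) % 2 = 1 := by omega
  rcases Nat.mod_two_eq_zero_or_one i with h | h
  · exact ⟨α, rfl, by simp [dragonAngle, heven, h], by simp [dragonAngle, hodd, h, sub_eq_add_neg]⟩
  · exact ⟨-α, cos_neg α, by simp [dragonAngle, heven, h], by simp [dragonAngle, hodd, h]⟩

lemma fcoef_add_fcoef (α : ℝ) (hα : cos α ≠ 0) (k i : ℕ) :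
    fcoef α (k + 1) (2 * i) + fcoef α (k + 1) (2 * i + 1) = fcoef α k i := by
  obtain ⟨ε, hε, h0, h1⟩ := dragonAngle_children α k i
  have hsum : cos (dragonAngle α k i + ε) + cos (dragonAngle α k i - ε) =
      2 * cos α * cos (dragonAngle α k i) := by
    rw [cos_add, cos_sub, hε]; ring
  simp only [fcoef, h0, h1, ← add_div, hsum, pow_succ]
  field_simp

lemma sum_range_two_mul_fcoef (α : ℝ) (hα : cos α ≠ 0) (k j : ℕ) :
    ∑ i ∈ Finset.range (2 * j), fcoef α (k + 1) i = ∑ i ∈ Finset.range j, fcoef α k i := by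
  induction j with
  | zero => simp
  | succ j ih =>
    rw [mul_add, mul_one, Finset.sum_range_succ _ (2 * j + 1), Finset.sum_range_succ _ (2 * j),
      ih, add_assoc, fcoef_add_fcoef α hα, Finset.sum_range_succ]

lemma abs_fcoef_le (α : ℝ) (hα : 0 < cos α) (k i : ℕ) :
    |fcoef α k i| ≤ 1 / (2 * cos α) ^ k := by
  rw [fcoef, abs_div, abs_of_pos (pow_pos (mul_pos two_pos hα) k)]
  gcongr
  exact abs_cos_le_one _

lemma abs_mul_two_mul_sub_le {a b s : ℝ} (hs0 : 0 ≤ s) (hs1 : s ≤ 1 / 2) :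
    |a * (2 * s) - (a + b) * s| ≤ |a - b| / 2 := by
  rw [show a * (2 * s) - (a + b) * s = (a - b) * s by ring, abs_mul, abs_of_nonneg hs0]
  nlinarith [abs_nonneg (a - b)]

lemma abs_add_mul_two_mul_sub_one_sub_le {a b s : ℝ} (hs0 : 1 / 2 ≤ s) (hs1 : s ≤ 1) :
    |a + b * (2 * s - 1) - (a + b) * s| ≤ |a - b| / 2 := by
  rw [show a + b * (2 * s - 1) - (a + b) * s = (a - b) * (1 - s) by ring, abs_mul,
    abs_of_nonneg (by linarith : 0 ≤ 1 - s)]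
  nlinarith [abs_nonneg (a - b)]

lemma abs_xfun_succ_sub_xfun_le (α : ℝ) (hα : cos α ≠ 0) {t : ℝ} (ht : t ∈ Set.Icc (0 : ℝ) 1)
    (n : ℕ) : |xfun α (n + 1) t - xfun α n t| ≤
      |fcoef α (n + 1) (2 * dyadicIndex n t) - fcoef α (n + 1) (2 * dyadicIndex n t + 1)| / 2 := by
  set j := dyadicIndex n t
  obtain ⟨h0, h1⟩ := sub_dyadicIndex_mem_Icc ht (n + 1)
  have hscale : t * 2 ^ (n + 1) = 2 * (t * 2 ^ n) := by ring
  rw [xfun_eq, xfun_eq, ← fcoef_add_fcoef α hα n j]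
  rcases dyadicIndex_succ n t with hm | hm <;> rw [hm] at h0 h1 ⊢ <;> push_cast at h0 h1 ⊢
  · rw [sum_range_two_mul_fcoef α hα, hscale, ← mul_sub, add_sub_add_left_eq_sub]
    exact abs_mul_two_mul_sub_le (by linarith) (by linarith)
  · rw [Finset.sum_range_succ, sum_range_two_mul_fcoef α hα, hscale,
      show 2 * (t * 2 ^ n) - (2 * j + 1) = 2 * (t * 2 ^ n - j) - 1 by ring, add_assoc,
      add_sub_add_left_eq_sub]
    exact abs_add_mul_two_mul_sub_one_sub_le (by linarith) (by linarith)

theorem stmt3 (α : ℝ) (hα0 : 0 < α) (hα1 : α < π / 3) :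
    ∀ t ∈ Set.Icc (0 : ℝ) 1, ∀ n : ℕ, 1 ≤ n →
      |xfun α (n + 1) t - xfun α n t| ≤ 4 / (2 * Real.cos α) ^ n := by
  intro t ht n _
  have hcos : 1 / 2 < cos α := by
    rw [← cos_pi_div_three]
    exact cos_lt_cos_of_nonneg_of_le_pi hα0.le (by linarith [pi_pos]) hα1
  have hc : 1 ≤ 2 * cos α := by linarith
  set j := dyadicIndex n t
  have ha := abs_fcoef_le α (by linarith) (n + 1) (2 * j)
  have hb := abs_fcoef_le α (by linarith) (n + 1) (2 * j + 1)
  calc |xfun α (n + 1) t - xfun α n t|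
      ≤ |fcoef α (n + 1) (2 * j) - fcoef α (n + 1) (2 * j + 1)| / 2 :=
        abs_xfun_succ_sub_xfun_le α (by linarith) ht n
    _ ≤ 1 / (2 * cos α) ^ (n + 1) := by
        linarith [abs_sub (fcoef α (n + 1) (2 * j)) (fcoef α (n + 1) (2 * j + 1))]
    _ ≤ 4 / (2 * cos α) ^ n :=
        div_le_div₀ (by norm_num) (by norm_num) (pow_pos (by linarith) n)
          (pow_le_pow_right₀ hc n.le_succ)
end

section
/- For the dragon curve coordinate functions with α ∈ (0, π/3): for all k ≥ 1, every l ≥ 1, and every 1 ≤ j ≤ 2^k, one has x_{k+l}(j/2^k) = x_k(j/2^k) and y_{k+l}(j/2^k) = y_k(j/2^k). In particular the dyadic values x_k(j/2^k) = f_{k,1} + ⋯ + f_{k,j} are fixed by all further refinements. -/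
open Real Filter

/-! Each coefficient of level `k` splits into the two coefficients of level `k + 1` below it: the
children of an edge with angle `b` have angles `b ± α`, and `cos (b + α) + cos (b - α) = 2 cos b cos α`
(likewise for `sin`), which the extra factor `2 cos α` in the normalisation cancels. Hence the partial
sums of level `k + l` over the first `j 2^l` coefficients equal those of level `k` over the first `j`,
and the polygonal interpolants `x_k`, `y_k` take exactly these partial sums at the nodes `j / 2^k`. -/

open Finset

theorem sum_range_two_mul_eq {M : Type*} [AddCommMonoid M] {c d : ℕ → M}
    (h : ∀ i, d (2 * i) + d (2 * i + 1) = c i) (j : ℕ) :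
    ∑ i ∈ range (2 * j), d i = ∑ i ∈ range j, c i := by
  induction j with
  | zero => simp
  | succ n ih =>
    rw [show 2 * (n + 1) = 2 * n + 1 + 1 by ring, sum_range_succ, sum_range_succ, sum_range_succ,
      ih, add_assoc, h]

theorem sum_range_mul_two_pow_eq {M : Type*} [AddCommMonoid M] {c : ℕ → ℕ → M}
    (h : ∀ m i, c (m + 1) (2 * i) + c (m + 1) (2 * i + 1) = c m i) (k j l : ℕ) :
    ∑ i ∈ range (j * 2 ^ l), c (k + l) i = ∑ i ∈ range j, c k i := by
  induction l with
  | zero => simp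
  | succ l ih =>
    rw [show j * 2 ^ (l + 1) = 2 * (j * 2 ^ l) by ring, ← add_assoc,
      sum_range_two_mul_eq (h (k + l)), ih]

section Dragon

variable (α : ℝ) (k i : ℕ)

theorem dragonAngle_succ_add_half :
    (dragonAngle α (k + 1) (2 * i) + dragonAngle α (k + 1) (2 * i + 1)) / 2 =
      dragonAngle α k i := by
  simp only [dragonAngle, show 2 * i / 2 = i by omega, show (2 * i + 1) / 2 = i by omega]
  split_ifs <;> first | omega | ring

theorem cos_dragonAngle_succ_sub_half :
    cos ((dragonAngle α (k + 1) (2 * i) - dragonAngle α (k + 1) (2 * i + 1)) / 2) = cos α := by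
  simp only [dragonAngle, show 2 * i / 2 = i by omega, show (2 * i + 1) / 2 = i by omega]
  split_ifs <;> first | omega | (ring_nf <;> exact cos_neg α)

variable {α}

theorem fcoef_succ_add (hc : cos α ≠ 0) :
    fcoef α (k + 1) (2 * i) + fcoef α (k + 1) (2 * i + 1) = fcoef α k i := by
  rw [fcoef, fcoef, ← add_div, cos_add_cos, dragonAngle_succ_add_half,
    cos_dragonAngle_succ_sub_half, fcoef, pow_succ]
  field_simp

theorem gcoef_succ_add (hc : cos α ≠ 0) :
    gcoef α (k + 1) (2 * i) + gcoef α (k + 1) (2 * i + 1) = gcoef α k i := by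
  rw [gcoef, gcoef, ← add_div, sin_add_sin, dragonAngle_succ_add_half,
    cos_dragonAngle_succ_sub_half, gcoef, pow_succ]
  field_simp

end Dragon

noncomputable def dyadicInterp (c : ℕ → ℝ) (k : ℕ) (t : ℝ) : ℝ :=
  (∑ i ∈ range (min ⌊t * 2 ^ k⌋₊ (2 ^ k - 1)), c i) +
    2 ^ k * c (min ⌊t * 2 ^ k⌋₊ (2 ^ k - 1)) * (t - (min ⌊t * 2 ^ k⌋₊ (2 ^ k - 1) : ℕ) / 2 ^ k)

theorem dyadicInterp_natCast_div (c : ℕ → ℝ) {k j : ℕ} (hj : j ≤ 2 ^ k) :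
    dyadicInterp c k (j / 2 ^ k) = ∑ i ∈ range j, c i := by
  have hnode : (j : ℝ) / 2 ^ k * 2 ^ k = j := by field_simp
  rw [dyadicInterp, hnode, Nat.floor_natCast]
  rcases hj.lt_or_eq with hlt | rfl
  · rw [min_eq_left (by omega), sub_self, mul_zero, add_zero]
  · -- at the right end point `t = 1` the node index is clamped to `2^k - 1`
    have hlast : 2 ^ k = 2 ^ k - 1 + 1 := (Nat.succ_pred_eq_of_pos (by positivity)).symm
    rw [min_eq_right (by omega)]
    conv_rhs => rw [hlast, sum_range_succ]
    rw [Nat.cast_pred (by positivity)]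
    field_simp
    ring

theorem xfun_eq_dyadicInterp (α : ℝ) (k : ℕ) : xfun α k = dyadicInterp (fcoef α k) k := rfl

theorem yfun_eq_dyadicInterp (α : ℝ) (k : ℕ) : yfun α k = dyadicInterp (gcoef α k) k := rfl

theorem dyadicInterp_refine {c : ℕ → ℕ → ℝ}
    (h : ∀ m i, c (m + 1) (2 * i) + c (m + 1) (2 * i + 1) = c m i) {k j : ℕ} (hj : j ≤ 2 ^ k)
    (l : ℕ) : dyadicInterp (c (k + l)) (k + l) (j / 2 ^ k) = dyadicInterp (c k) k (j / 2 ^ k) := by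
  have hnode : (j : ℝ) / 2 ^ k = ((j * 2 ^ l : ℕ) : ℝ) / 2 ^ (k + l) := by
    push_cast
    rw [pow_add]
    field_simp
  have hjl : j * 2 ^ l ≤ 2 ^ (k + l) := by
    rw [pow_add]
    exact Nat.mul_le_mul_right _ hj
  rw [dyadicInterp_natCast_div _ hj, hnode, dyadicInterp_natCast_div _ hjl,
    sum_range_mul_two_pow_eq h]

theorem stmt6 (α : ℝ) (hα0 : 0 < α) (hα1 : α < π / 3) :
    ∀ k : ℕ, 1 ≤ k → ∀ l : ℕ, 1 ≤ l → ∀ j : ℕ, 1 ≤ j → j ≤ 2 ^ k →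
      xfun α (k + l) ((j : ℝ) / 2 ^ k) = xfun α k ((j : ℝ) / 2 ^ k) ∧
      yfun α (k + l) ((j : ℝ) / 2 ^ k) = yfun α k ((j : ℝ) / 2 ^ k) ∧
      xfun α k ((j : ℝ) / 2 ^ k) = ∑ i ∈ Finset.range j, fcoef α k i := by
  intro k _ l _ j _ hj
  have hc : cos α ≠ 0 := (cos_pos_of_mem_Ioo ⟨by linarith [pi_pos], by linarith⟩).ne'
  simp only [xfun_eq_dyadicInterp, yfun_eq_dyadicInterp]
  exact ⟨dyadicInterp_refine (fcoef_succ_add · · hc) hj l,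
    dyadicInterp_refine (gcoef_succ_add · · hc) hj l, dyadicInterp_natCast_div _ hj⟩
end

section
/- For all k ≥ 0, x_k(0) = 0, y_k(0) = 0, y_k(1) = 0 and x_k(1) = 1; equivalently ∑_{i=1}^{2^k} cos(b_{k,i})/(2cos α)^k = 1 and ∑_{i=1}^{2^k} sin(b_{k,i})/(2cos α)^k = 0. -/
open Real Filter

/-!
The two children of the angle `θ = b_{k,j}` are `θ + α` and `θ - α` (in some order), and
`cos (θ + α) + cos (θ - α) = 2 cos α cos θ`, `sin (θ + α) + sin (θ - α) = 2 cos α sin θ`.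
Hence each refinement step multiplies `∑ᵢ cos b_{k,i}` and `∑ᵢ sin b_{k,i}` by `2 cos α`, so these
sums are `(2 cos α)^k` and `0`. The curves `x_k`, `y_k` interpolate the partial sums of the
normalised coefficients, so they start at `0` and end at the full sums `1` and `0`.
-/

open Finset

lemma sum_range_two_mul_eq_sum_pairs {M : Type*} [AddCommMonoid M] (f : ℕ → M) (n : ℕ) :
    ∑ i ∈ range (2 * n), f i = ∑ j ∈ range n, (f (2 * j) + f (2 * j + 1)) := by
  induction n with
  | zero => simp
  | succ n ih =>
    rw [show 2 * (n + 1) = 2 * n + 1 + 1 by ring, sum_range_succ, sum_range_succ, sum_range_succ,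
      ih, add_assoc]

section DragonAngle

variable {M : Type*} [AddCommMonoid M] (f : ℝ → M) (α : ℝ)

lemma dragonAngle_succ_pair (k j : ℕ) :
    f (dragonAngle α (k + 1) (2 * j)) + f (dragonAngle α (k + 1) (2 * j + 1)) =
      f (dragonAngle α k j + α) + f (dragonAngle α k j - α) := by
  have hdiv : (2 * j + 1) / 2 = j := by omega
  simp only [dragonAngle, Nat.mul_div_cancel_left j two_pos, Nat.mul_mod_right, hdiv,
    Nat.mul_add_mod_self_left, sub_eq_add_neg]
  rcases Nat.mod_two_eq_zero_or_one j with h | h <;> simp [h, add_comm]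

lemma sum_dragonAngle_succ (k : ℕ) :
    ∑ i ∈ range (2 ^ (k + 1)), f (dragonAngle α (k + 1) i) =
      ∑ j ∈ range (2 ^ k), (f (dragonAngle α k j + α) + f (dragonAngle α k j - α)) := by
  rw [pow_succ', sum_range_two_mul_eq_sum_pairs]
  exact sum_congr rfl fun j _ ↦ dragonAngle_succ_pair f α k j

end DragonAngle

lemma sum_cos_dragonAngle (α : ℝ) (k : ℕ) :
    ∑ i ∈ range (2 ^ k), cos (dragonAngle α k i) = (2 * cos α) ^ k := by
  induction k with
  | zero => simp [dragonAngle]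
  | succ k ih =>
    rw [sum_dragonAngle_succ, pow_succ', ← ih, mul_sum]
    refine sum_congr rfl fun j _ ↦ ?_
    rw [cos_add, cos_sub]
    ring

lemma sum_sin_dragonAngle (α : ℝ) (k : ℕ) :
    ∑ i ∈ range (2 ^ k), sin (dragonAngle α k i) = 0 := by
  induction k with
  | zero => simp [dragonAngle]
  | succ k ih =>
    rw [sum_dragonAngle_succ, ← mul_zero (2 * cos α), ← ih, mul_sum]
    refine sum_congr rfl fun j _ ↦ ?_
    rw [sin_add, sin_sub]
    ring

/-- The polygonal curve through the points `(n / 2^k, ∑_{i<n} g i)`, `0 ≤ n ≤ 2^k`; this is the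
common shape of `xfun` and `yfun`. -/
noncomputable def partialSumInterp (k : ℕ) (g : ℕ → ℝ) (t : ℝ) : ℝ :=
  (∑ i ∈ range (min ⌊t * 2 ^ k⌋₊ (2 ^ k - 1)), g i) +
    2 ^ k * g (min ⌊t * 2 ^ k⌋₊ (2 ^ k - 1)) * (t - (min ⌊t * 2 ^ k⌋₊ (2 ^ k - 1) : ℕ) / 2 ^ k)

lemma partialSumInterp_zero (k : ℕ) (g : ℕ → ℝ) : partialSumInterp k g 0 = 0 := by
  simp [partialSumInterp]

lemma partialSumInterp_one (k : ℕ) (g : ℕ → ℝ) :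
    partialSumInterp k g 1 = ∑ i ∈ range (2 ^ k), g i := by
  have hk : 1 ≤ 2 ^ k := Nat.one_le_two_pow
  have hmin : min ⌊(1 : ℝ) * 2 ^ k⌋₊ (2 ^ k - 1) = 2 ^ k - 1 := by
    rw [one_mul, show (2 : ℝ) ^ k = ((2 ^ k : ℕ) : ℝ) by norm_cast, Nat.floor_natCast]
    omega
  have hlast : (2 : ℝ) ^ k * g (2 ^ k - 1) * (1 - ((2 ^ k - 1 : ℕ) : ℝ) / 2 ^ k) = g (2 ^ k - 1) := by
    push_cast [hk]
    field_simp
    ring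
  rw [partialSumInterp, hmin, hlast, ← sum_range_succ, Nat.sub_add_cancel hk]

theorem stmt7 (α : ℝ) (hα0 : 0 < α) (hα1 : α < π / 3) :
    ∀ k : ℕ,
      xfun α k 0 = 0 ∧ yfun α k 0 = 0 ∧ yfun α k 1 = 0 ∧ xfun α k 1 = 1 ∧
      (∑ i ∈ Finset.range (2 ^ k), Real.cos (dragonAngle α k i) / (2 * Real.cos α) ^ k) = 1 ∧
      (∑ i ∈ Finset.range (2 ^ k), Real.sin (dragonAngle α k i) / (2 * Real.cos α) ^ k) = 0 := by
  have hcos : cos α ≠ 0 := (cos_pos_of_mem_Ioo ⟨by linarith [pi_pos], by linarith⟩).ne'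
  intro k
  have hx : ∑ i ∈ range (2 ^ k), cos (dragonAngle α k i) / (2 * cos α) ^ k = 1 := by
    rw [← sum_div, sum_cos_dragonAngle, div_self (pow_ne_zero _ (mul_ne_zero two_ne_zero hcos))]
  have hy : ∑ i ∈ range (2 ^ k), sin (dragonAngle α k i) / (2 * cos α) ^ k = 0 := by
    rw [← sum_div, sum_sin_dragonAngle, zero_div]
  refine ⟨partialSumInterp_zero k _, partialSumInterp_zero k _, ?_, ?_, hx, hy⟩
  · exact (partialSumInterp_one k (gcoef α k)).trans hy
  · exact (partialSumInterp_one k (fcoef α k)).trans hx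
end

section
/- Let α = (p/q)·2π be rational in lowest terms with 0 < p/q < 1/6 and k = 2l even. Among the 2^k segments of the k-th dragon curve step (whose angles are kα − 2iα with multiplicity binomial(k,i)), the total number of segments whose angle has zero cosine (i.e. is ≡ ±π/2 mod 2π) is at most 2^{k−1}. -/
/-!
Consecutive angles `kα - 2iα` and `kα - 2(i+1)α` differ by `2α ∈ (0, π)`, and two zeros of
the cosine never differ by an amount strictly between `0` and `π`. So the indices `i` with zero
cosine contain no two consecutive integers. By Pascal's rule each `(n+1).choose i` splits into
`n.choose (i-1) + n.choose i`, and for a set without consecutive elements these pieces are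
pairwise distinct binomial coefficients of row `n`, which sum to at most `2 ^ n`.
-/

open Real
open scoped Classical

namespace Nat

theorem sum_choose_le_two_pow (n : ℕ) (s : Finset ℕ) : ∑ i ∈ s, n.choose i ≤ 2 ^ n :=
  calc ∑ i ∈ s, n.choose i
      ≤ ∑ i ∈ Finset.range (n + 1), n.choose i := Finset.sum_le_sum_of_ne_zero fun i _ hi =>
        Finset.mem_range.2 (by_contra fun h => hi (choose_eq_zero_of_lt (by omega)))
    _ = 2 ^ n := sum_range_choose n

/-- Pascal's rule, with `Finset.Icc (i - 1) i = {0}` covering the edge case `i = 0`. -/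
theorem choose_succ_eq_sum_Icc (n i : ℕ) :
    (n + 1).choose i = ∑ j ∈ Finset.Icc (i - 1) i, n.choose j := by
  cases i with
  | zero => simp
  | succ i =>
    rw [Nat.add_sub_cancel, ← Finset.insert_Icc_add_one_left_eq_Icc (by omega), Finset.Icc_self,
      Finset.sum_insert (by simp), Finset.sum_singleton, choose_succ_succ']

theorem sum_choose_le_two_pow_pred {s : Finset ℕ} (hs : ∀ i ∈ s, i + 1 ∉ s) (n : ℕ) :
    ∑ i ∈ s, n.choose i ≤ 2 ^ (n - 1) := by
  cases n with
  | zero => simpa using sum_choose_le_two_pow 0 s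
  | succ n =>
    have hdisj : (s : Set ℕ).PairwiseDisjoint fun i => Finset.Icc (i - 1) i := by
      intro i hi j hj hij
      refine Finset.disjoint_left.2 fun x hxi hxj => ?_
      simp only [Finset.mem_Icc] at hxi hxj
      rcases Nat.lt_or_gt_of_ne hij with h | h
      · exact hs i hi (by rwa [show i + 1 = j by omega])
      · exact hs j hj (by rwa [show j + 1 = i by omega])
    calc ∑ i ∈ s, (n + 1).choose i
        = ∑ j ∈ s.biUnion fun i => Finset.Icc (i - 1) i, n.choose j := by
          simp only [choose_succ_eq_sum_Icc, Finset.sum_biUnion hdisj]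
      _ ≤ 2 ^ n := sum_choose_le_two_pow n _

end Nat

theorem Real.cos_ne_zero_of_cos_eq_zero_of_sub_mem_Ioo {x y : ℝ} (hx : cos x = 0)
    (h₀ : 0 < x - y) (hπ : x - y < π) : cos y ≠ 0 := fun hy => by
  have hsin := sin_pos_of_pos_of_lt_pi h₀ hπ
  rw [sin_sub, hx, hy] at hsin
  simp at hsin

theorem two_mul_angle_mem_Ioo {p q : ℕ} (hp : 0 < p) (hq : 6 * p < q) :
    0 < 2 * ((p : ℝ) / q * (2 * π)) ∧ 2 * ((p : ℝ) / q * (2 * π)) < π := by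
  have hq' : (0 : ℝ) < q := by exact_mod_cast (by omega : 0 < q)
  have hpq : (6 * p : ℝ) < q := by exact_mod_cast hq
  have hp' : (0 : ℝ) < p := by exact_mod_cast hp
  constructor
  · positivity
  · rw [show 2 * ((p : ℝ) / q * (2 * π)) = 4 * p / q * π by ring]
    exact mul_lt_of_lt_one_left pi_pos ((div_lt_one hq').2 (by linarith))

theorem stmt15_general (p q : ℕ) (hp : 0 < p) (hq : 6 * p < q)
    (α : ℝ) (hα : α = (p : ℝ) / (q : ℝ) * (2 * π))
    (k : ℕ) :
    ∑ i ∈ (Finset.range (k + 1)).filter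
        (fun i : ℕ => Real.cos ((k : ℝ) * α - 2 * (i : ℝ) * α) = 0),
      k.choose i ≤ 2 ^ (k - 1) := by
  obtain ⟨h₀, hπ⟩ := two_mul_angle_mem_Ioo hp hq
  rw [← hα] at h₀ hπ
  refine Nat.sum_choose_le_two_pow_pred (fun i hi hi₁ => ?_) k
  simp only [Finset.mem_filter] at hi hi₁
  refine cos_ne_zero_of_cos_eq_zero_of_sub_mem_Ioo hi.2 ?_ ?_ hi₁.2 <;> push_cast <;> linarith

theorem stmt15 (p q : ℕ) (hpq : Nat.Coprime p q) (hp : 0 < p) (hq : 6 * p < q)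
    (α : ℝ) (hα : α = (p : ℝ) / (q : ℝ) * (2 * π))
    (k l : ℕ) (hk : k = 2 * l) :
    ∑ i ∈ (Finset.range (k + 1)).filter
        (fun i : ℕ => Real.cos ((k : ℝ) * α - 2 * (i : ℝ) * α) = 0),
      k.choose i ≤ 2 ^ (k - 1) :=
  stmt15_general p q hp hq α hα k
end
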